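/- arXiv:1907.01601 — 3 statements merged into one kernel-verified Lean document; each statement's English description precedes it below -/
import Mathlib

section
/- For the recursive model X_{n+1} = (X_{n,1} + ... + X_{n,m} − 1)^+, the sequence E(X_n)/m^n is non-increasing in n and the sequence (E(X_n) − 1/(m−1))/m^n is non-decreasing in n; consequently both sequences converge to a common limit F_∞ ≥ 0 (the free energy), and for every n one has (E(X_n) − 1/(m−1))/m^n ≤ F_∞ ≤ E(X_n)/m^n. -/
open scoped ENNReal

/-- Law of the sum of `n` i.i.d. copies of a `PMF ℕ`. -/
noncomputable def sumIID (p : PMF ℕ) : ℕ → PMF ℕ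
  | 0 => PMF.pure 0
  | (k+1) => (sumIID p k).bind (fun s => p.map (fun a => a + s))

/-- One step of the Derrida–Retaux recursion: `X' = (X_1 + ⋯ + X_m − 1)⁺`. -/
noncomputable def step (m : ℕ) (p : PMF ℕ) : PMF ℕ :=
  (sumIID p m).map (fun s => s - 1)

/-- Real-valued expectation of a `PMF ℕ`. -/
noncomputable def realE (p : PMF ℕ) : ℝ := (∑' k, p k * (k : ℝ≥0∞)).toReal

/-!
Writing `e_n` for the mean of `X n`, the step `X ↦ (X₁ + ⋯ + X_m − 1)⁺` satisfies
`m e_n − 1 ≤ e_{n+1} ≤ m e_n`, since `s − 1 ≤ (s − 1)⁺ ≤ s` and the mean of the sum is `m e_n`.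
The upper bound makes `e_n / m^n` non-increasing; the lower bound, rewritten as
`m (e_n − c) ≤ e_{n+1} − c` with `c = 1/(m − 1)`, makes `(e_n − c) / m^n` non-decreasing.
The two sequences differ by `c / m^n → 0`, so they squeeze a common limit.
-/

open Filter Topology

namespace PMF

variable {α β : Type*}

theorem tsum_bind_mul (p : PMF α) (q : α → PMF β) (g : β → ℝ≥0∞) :
    ∑' b, p.bind q b * g b = ∑' a, p a * ∑' b, q a b * g b := by
  simp_rw [bind_apply, ← ENNReal.tsum_mul_right, ← ENNReal.tsum_mul_left, mul_assoc]
  exact ENNReal.tsum_comm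

theorem tsum_pure_mul (a : α) (g : α → ℝ≥0∞) : ∑' b, pure a b * g b = g a := by
  classical
  rw [tsum_eq_single a fun b hb => by rw [pure_apply_of_ne _ _ hb, zero_mul], pure_apply_self,
    one_mul]

theorem tsum_map_mul (p : PMF α) (f : α → β) (g : β → ℝ≥0∞) :
    ∑' b, p.map f b * g b = ∑' a, p a * g (f a) := by
  simp_rw [map, tsum_bind_mul, Function.comp_apply, tsum_pure_mul]

end PMF

/-- Unlike `realE`, this mean takes no junk value when it is infinite. -/
noncomputable def lmean (p : PMF ℕ) : ℝ≥0∞ := ∑' k, p k * k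

theorem lmean_map_add_const (p : PMF ℕ) (s : ℕ) :
    lmean (p.map (· + s)) = lmean p + s := by
  simp_rw [lmean, PMF.tsum_map_mul, Nat.cast_add, mul_add]
  rw [ENNReal.tsum_add, ENNReal.tsum_mul_right, p.tsum_coe, one_mul]

theorem lmean_sumIID (p : PMF ℕ) (k : ℕ) : lmean (sumIID p k) = k * lmean p := by
  induction k with
  | zero => simp [sumIID, lmean]
  | succ k ih =>
    rw [sumIID, lmean, PMF.tsum_bind_mul]
    simp_rw [← lmean.eq_def, lmean_map_add_const, mul_add]
    rw [ENNReal.tsum_add, ENNReal.tsum_mul_right, PMF.tsum_coe, one_mul, ← lmean.eq_def, ih]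
    push_cast
    ring

theorem lmean_map_pred_le (p : PMF ℕ) : lmean (p.map (· - 1)) ≤ lmean p := by
  rw [lmean, PMF.tsum_map_mul]
  exact ENNReal.tsum_le_tsum fun k => by gcongr; exact Nat.sub_le k 1

theorem lmean_le_lmean_map_pred_add_one (p : PMF ℕ) : lmean p ≤ lmean (p.map (· - 1)) + 1 := by
  rw [lmean, lmean, PMF.tsum_map_mul]
  calc ∑' k, p k * k ≤ ∑' k, (p k * ((k - 1 : ℕ) : ℝ≥0∞) + p k) := by
        gcongr with k
        rw [← mul_add_one]
        gcongr
        exact_mod_cast (by omega : k ≤ k - 1 + 1)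
    _ = ∑' k, p k * ((k - 1 : ℕ) : ℝ≥0∞) + 1 := by rw [ENNReal.tsum_add, p.tsum_coe]

theorem lmean_step_le (m : ℕ) (p : PMF ℕ) : lmean (step m p) ≤ m * lmean p :=
  (lmean_map_pred_le _).trans (lmean_sumIID p m).le

theorem mul_lmean_le_lmean_step_add_one (m : ℕ) (p : PMF ℕ) :
    m * lmean p ≤ lmean (step m p) + 1 :=
  (lmean_sumIID p m).ge.trans (lmean_le_lmean_map_pred_add_one _)

theorem lmean_step_ne_top (m : ℕ) {p : PMF ℕ} (hp : lmean p ≠ ∞) : lmean (step m p) ≠ ∞ :=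
  ((lmean_step_le m p).trans_lt (ENNReal.mul_lt_top (ENNReal.natCast_lt_top m) hp.lt_top)).ne

theorem realE_step_le (m : ℕ) {p : PMF ℕ} (hp : lmean p ≠ ∞) :
    realE (step m p) ≤ m * realE p := by
  simpa [realE, lmean] using
    ENNReal.toReal_mono (ENNReal.mul_ne_top (ENNReal.natCast_ne_top m) hp) (lmean_step_le m p)

theorem mul_realE_le_realE_step_add_one (m : ℕ) {p : PMF ℕ} (hp : lmean p ≠ ∞) :
    m * realE p ≤ realE (step m p) + 1 := by
  have hstep := lmean_step_ne_top m hp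
  have h := ENNReal.toReal_mono (ENNReal.add_ne_top.2 ⟨hstep, ENNReal.one_ne_top⟩)
    (mul_lmean_le_lmean_step_add_one m p)
  rw [ENNReal.toReal_add hstep ENNReal.one_ne_top] at h
  simpa [realE, lmean] using h

section RealSequence

variable {m : ℝ} {e : ℕ → ℝ}

theorem monotone_div_pow_of_mul_le (hm : 0 < m) (h : ∀ n, m * e n ≤ e (n + 1)) :
    Monotone fun n => e n / m ^ n := by
  refine monotone_nat_of_le_succ fun n => ?_
  calc e n / m ^ n = m * e n / m ^ (n + 1) := by rw [pow_succ]; field_simp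
    _ ≤ e (n + 1) / m ^ (n + 1) := by gcongr; exact h n

theorem antitone_div_pow_of_le_mul (hm : 0 < m) (h : ∀ n, e (n + 1) ≤ m * e n) :
    Antitone fun n => e n / m ^ n := by
  have := monotone_div_pow_of_mul_le (e := -e) hm fun n => by simpa using h n
  simpa [neg_div] using this.neg

theorem monotone_sub_div_pow (hm : 1 < m) (h : ∀ n, m * e n ≤ e (n + 1) + 1) :
    Monotone fun n => (e n - 1 / (m - 1)) / m ^ n := by
  have hc : m * (1 / (m - 1)) = 1 / (m - 1) + 1 := by
    field_simp [sub_ne_zero.2 hm.ne']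
    ring
  refine monotone_div_pow_of_mul_le (by linarith) fun n => ?_
  rw [mul_sub, hc]
  linarith [h n]

end RealSequence

theorem exists_tendsto_of_monotone_of_antitone {a b : ℕ → ℝ} (hb : Monotone b) (ha : Antitone a)
    (hab : Tendsto (a - b) atTop (𝓝 0)) :
    ∃ F, Tendsto a atTop (𝓝 F) ∧ Tendsto b atTop (𝓝 F) ∧ ∀ n, b n ≤ F ∧ F ≤ a n := by
  have hgap : Antitone (a - b) := fun i j hij => sub_le_sub (ha hij) (hb hij)
  have hba : ∀ n, b n ≤ a n := fun n => sub_nonneg.1 (hgap.le_of_tendsto hab n)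
  have hbdd : BddAbove (Set.range b) :=
    ⟨a 0, by rintro _ ⟨n, rfl⟩; exact (hba n).trans (ha n.zero_le)⟩
  have hb_lim := tendsto_atTop_ciSup hb hbdd
  have ha_lim : Tendsto a atTop (𝓝 (⨆ n, b n)) := by simpa using hab.add hb_lim
  exact ⟨_, ha_lim, hb_lim, fun n => ⟨hb.ge_of_tendsto hb_lim n, ha.le_of_tendsto ha_lim n⟩⟩

theorem stmt1 (m : ℕ) (hm : 2 ≤ m) (X : ℕ → PMF ℕ)
    (hX : ∀ n, X (n+1) = step m (X n))
    (h0 : (∑' k, X 0 k * (k : ℝ≥0∞)) < ∞) :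
    Antitone (fun n => realE (X n) / (m : ℝ) ^ n) ∧
    Monotone (fun n => (realE (X n) - 1 / ((m : ℝ) - 1)) / (m : ℝ) ^ n) ∧
    ∃ F : ℝ, 0 ≤ F ∧
      Filter.Tendsto (fun n => realE (X n) / (m : ℝ) ^ n) Filter.atTop (nhds F) ∧
      Filter.Tendsto (fun n => (realE (X n) - 1 / ((m : ℝ) - 1)) / (m : ℝ) ^ n)
        Filter.atTop (nhds F) ∧
      ∀ n, (realE (X n) - 1 / ((m : ℝ) - 1)) / (m : ℝ) ^ n ≤ F ∧
        F ≤ realE (X n) / (m : ℝ) ^ n := by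
  have hm' : (1 : ℝ) < m := by exact_mod_cast hm
  have hfin : ∀ n, lmean (X n) ≠ ∞ := by
    intro n
    induction n with
    | zero => exact h0.ne
    | succ n ih => rw [hX]; exact lmean_step_ne_top m ih
  have hdecr := antitone_div_pow_of_le_mul (e := fun n => realE (X n)) (by positivity)
    fun n => hX n ▸ realE_step_le m (hfin n)
  have hincr := monotone_sub_div_pow (e := fun n => realE (X n)) hm'
    fun n => hX n ▸ mul_realE_le_realE_step_add_one m (hfin n)
  have hgap : Tendsto ((fun n => realE (X n) / (m : ℝ) ^ n) -
      fun n => (realE (X n) - 1 / ((m : ℝ) - 1)) / (m : ℝ) ^ n) atTop (𝓝 0) := by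
    refine (tendsto_const_nhds (x := 1 / ((m : ℝ) - 1))).div_atTop
      (tendsto_pow_atTop_atTop_of_one_lt hm') |>.congr fun n => ?_
    simp only [Pi.sub_apply, ← sub_div, sub_sub_cancel]
  obtain ⟨F, hdecr_lim, hincr_lim, hbounds⟩ :=
    exists_tendsto_of_monotone_of_antitone hincr hdecr hgap
  refine ⟨hdecr, hincr, F, ge_of_tendsto' hdecr_lim fun n => ?_, hdecr_lim, hincr_lim, hbounds⟩
  exact div_nonneg ENNReal.toReal_nonneg (by positivity)
end

section
/- In the critical regime, i.e. when (m−1)·E(Y_0 m^{Y_0}) = E(m^{Y_0}) < ∞, one has E(m^{Y_n}) ≤ m^{1/(m−1)} for all n ≥ 0. -/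
open scoped ENNReal

/-
Write `G = E m^Y` and `H = E Y m^Y`. Conditioning on `S = Y₁ + ⋯ + Yₘ`, whose generating
function is the `m`-th power of that of `Y`, one step of the recursion gives
`m G' = G^m + (m - 1) P(Y = 0)^m` and `m H' + G^m = m H G^(m-1) + P(Y = 0)^m`,
so the critical relation `(m - 1) H = G < ∞` is preserved along the recursion.
Under it, the tangent-line bound `1 - u ≤ e^(-u)` gives, with `t = log m / (m - 1)`,
`(1 + t) m^k ≤ e^t + t (m - 1) k m^k` for every `k`; taking expectations,
`(1 + t) G ≤ e^t + t G`, that is `G ≤ e^t = m^(1/(m-1))`.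
-/

lemma one_add_mul_rpow_le {r : ℝ} (hr : 1 < r) (x : ℝ) :
    (1 + Real.log r / (r - 1)) * r ^ x
      ≤ r ^ (1 / (r - 1)) + Real.log r / (r - 1) * ((r - 1) * (x * r ^ x)) := by
  have hr0 : 0 < r := by linarith
  set t := Real.log r / (r - 1)
  set u := x * Real.log r - t
  have htu : t * ((r - 1) * x) = u + t := by
    simp only [u, t]; field_simp [(by linarith : r - 1 ≠ 0)]; ring
  have hrx : r ^ x = Real.exp u * Real.exp t := by
    rw [← Real.exp_add, Real.rpow_def_of_pos hr0]; congr 1; simp only [u]; ring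
  have hC : r ^ (1 / (r - 1)) = Real.exp t := by
    rw [Real.rpow_def_of_pos hr0]; congr 1; simp only [t]; ring
  have htangent : (1 - u) * Real.exp u ≤ 1 :=
    calc (1 - u) * Real.exp u ≤ Real.exp (-u) * Real.exp u :=
          mul_le_mul_of_nonneg_right (Real.one_sub_le_exp_neg u) (Real.exp_pos u).le
      _ = 1 := by rw [← Real.exp_add, neg_add_cancel, Real.exp_zero]
  have hlin : t * ((r - 1) * (x * r ^ x)) = (u + t) * r ^ x := by rw [← htu]; ring
  rw [hlin, hrx, hC]
  nlinarith [Real.exp_pos t]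

namespace PMF

variable {α β : Type*}

noncomputable def lexpect (p : PMF α) (g : α → ℝ≥0∞) : ℝ≥0∞ := ∑' a, p a * g a

lemma lexpect_congr (p : PMF α) {f g : α → ℝ≥0∞} (h : ∀ a, f a = g a) :
    p.lexpect f = p.lexpect g :=
  congrArg p.lexpect (funext h)

lemma lexpect_pure (a : α) (g : α → ℝ≥0∞) : (PMF.pure a).lexpect g = g a := by
  classical
  rw [lexpect, tsum_eq_single a fun b hb => by simp [PMF.pure_apply, hb]]
  simp

lemma lexpect_map (p : PMF α) (f : α → β) (g : β → ℝ≥0∞) :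
    (p.map f).lexpect g = p.lexpect fun a => g (f a) := by
  classical
  simp only [lexpect, PMF.map_apply, ← ENNReal.tsum_mul_right]
  rw [ENNReal.tsum_comm]
  refine tsum_congr fun a => ?_
  rw [tsum_eq_single (f a) fun b hb => by simp [hb]]
  simp

lemma lexpect_bind (p : PMF α) (q : α → PMF β) (g : β → ℝ≥0∞) :
    (p.bind q).lexpect g = p.lexpect fun a => (q a).lexpect g := by
  simp only [lexpect, PMF.bind_apply, ← ENNReal.tsum_mul_right, ← ENNReal.tsum_mul_left,
    mul_assoc]
  exact ENNReal.tsum_comm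

lemma lexpect_add (p : PMF α) (f g : α → ℝ≥0∞) :
    (p.lexpect fun a => f a + g a) = p.lexpect f + p.lexpect g := by
  simp only [lexpect, mul_add]
  exact ENNReal.tsum_add

lemma lexpect_const_mul (p : PMF α) (c : ℝ≥0∞) (g : α → ℝ≥0∞) :
    (p.lexpect fun a => c * g a) = c * p.lexpect g := by
  simp only [lexpect, mul_left_comm _ c]
  exact ENNReal.tsum_mul_left

lemma lexpect_mul_const (p : PMF α) (g : α → ℝ≥0∞) (c : ℝ≥0∞) :
    (p.lexpect fun a => g a * c) = p.lexpect g * c := by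
  simp only [mul_comm _ c]
  exact lexpect_const_mul p c g

lemma lexpect_const (p : PMF α) (c : ℝ≥0∞) : (p.lexpect fun _ => c) = c := by
  rw [lexpect, ENNReal.tsum_mul_right, PMF.tsum_coe, one_mul]

lemma lexpect_mono (p : PMF α) {f g : α → ℝ≥0∞} (h : ∀ a, f a ≤ g a) :
    p.lexpect f ≤ p.lexpect g :=
  ENNReal.tsum_le_tsum fun a => mul_le_mul_right (h a) _

lemma lexpect_zero_pow (p : PMF ℕ) : (p.lexpect fun k => 0 ^ k) = p 0 := by
  rw [lexpect, tsum_eq_single 0 fun k hk => by simp [zero_pow hk]]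
  simp

lemma lexpect_sumIID_succ (p : PMF ℕ) (k : ℕ) (g : ℕ → ℝ≥0∞) :
    (sumIID p (k + 1)).lexpect g = (sumIID p k).lexpect fun s => p.lexpect fun a => g (a + s) := by
  simp only [sumIID, lexpect_bind, lexpect_map]

lemma lexpect_sumIID_pow (p : PMF ℕ) (c : ℝ≥0∞) (k : ℕ) :
    ((sumIID p k).lexpect fun s => c ^ s) = (p.lexpect fun a => c ^ a) ^ k := by
  induction k with
  | zero => simp [sumIID, lexpect_pure]
  | succ k ih =>
    simp only [lexpect_sumIID_succ, pow_add, lexpect_mul_const, lexpect_const_mul, ih, pow_succ']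

lemma lexpect_sumIID_mul_pow (p : PMF ℕ) (c : ℝ≥0∞) (k : ℕ) :
    ((sumIID p k).lexpect fun s => s * c ^ s)
      = k * (p.lexpect fun a => a * c ^ a) * (p.lexpect fun a => c ^ a) ^ (k - 1) := by
  induction k with
  | zero => simp [sumIID, lexpect_pure]
  | succ k ih =>
    have hsplit : ∀ s : ℕ, (p.lexpect fun a => ((a + s : ℕ) : ℝ≥0∞) * c ^ (a + s))
        = (p.lexpect fun a => a * c ^ a) * c ^ s + (s * c ^ s) * p.lexpect fun a => c ^ a :=
      fun s => by
        rw [← lexpect_mul_const, ← lexpect_const_mul, ← lexpect_add]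
        exact lexpect_congr p fun a => by push_cast; ring
    rw [lexpect_sumIID_succ, lexpect_congr _ hsplit, lexpect_add, lexpect_const_mul,
      lexpect_mul_const, lexpect_sumIID_pow, ih]
    rcases k with _ | k
    · simp
    · push_cast [pow_succ]
      ring

lemma lexpect_step_pow (m : ℕ) (p : PMF ℕ) {c : ℝ≥0∞} (hc : 1 ≤ c) :
    c * ((step m p).lexpect fun k => c ^ k)
      = (p.lexpect fun a => c ^ a) ^ m + (c - 1) * p 0 ^ m := by
  have hpoint : ∀ s, c * c ^ (s - 1) = c ^ s + (c - 1) * 0 ^ s := by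
    rintro (_ | s)
    · simp [add_tsub_cancel_of_le hc]
    · simp [pow_succ']
  rw [step, lexpect_map, ← lexpect_const_mul, lexpect_congr _ hpoint, lexpect_add,
    lexpect_const_mul, lexpect_sumIID_pow, lexpect_sumIID_pow, lexpect_zero_pow]

lemma lexpect_step_mul_pow (m : ℕ) (p : PMF ℕ) (c : ℝ≥0∞) :
    c * ((step m p).lexpect fun k => k * c ^ k) + (p.lexpect fun a => c ^ a) ^ m
      = m * (p.lexpect fun a => a * c ^ a) * (p.lexpect fun a => c ^ a) ^ (m - 1) + p 0 ^ m := by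
  have hpoint : ∀ s : ℕ, c * ((s - 1 : ℕ) * c ^ (s - 1)) + c ^ s = s * c ^ s + 0 ^ s := by
    rintro (_ | s)
    · simp
    · push_cast [Nat.add_sub_cancel, pow_succ]
      ring
  rw [step, lexpect_map, ← lexpect_const_mul, ← lexpect_sumIID_pow, ← lexpect_add,
    lexpect_congr _ hpoint, lexpect_add, lexpect_sumIID_mul_pow, lexpect_sumIID_pow,
    lexpect_zero_pow]

lemma lexpect_step_pow_ne_top (m : ℕ) (p : PMF ℕ) {c : ℝ≥0∞} (hc : 1 ≤ c)
    (hc_top : c ≠ ∞) (hf : (p.lexpect fun a => c ^ a) ≠ ∞) :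
    ((step m p).lexpect fun k => c ^ k) ≠ ∞ := by
  have hq : p 0 ≠ ∞ := p.apply_ne_top 0
  have hfin : c * ((step m p).lexpect fun k => c ^ k) ≠ ∞ := by
    rw [lexpect_step_pow m p hc]
    finiteness
  exact (ENNReal.lt_top_of_mul_ne_top_right hfin (zero_lt_one.trans_le hc).ne').ne

def IsCritical (p : PMF ℕ) (c : ℝ≥0∞) : Prop :=
  (c - 1) * (p.lexpect fun k => k * c ^ k) = (p.lexpect fun k => c ^ k)
    ∧ (p.lexpect fun k => c ^ k) ≠ ∞

lemma isCritical_step {m : ℕ} {p : PMF ℕ} (hm : 0 < m) (h : p.IsCritical m) :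
    (step m p).IsCritical m := by
  set M : ℝ≥0∞ := (m : ℝ≥0∞)
  have hM1 : 1 ≤ M := Nat.one_le_cast.mpr hm
  refine ⟨?_, lexpect_step_pow_ne_top m p hM1 (ENNReal.natCast_ne_top m) h.2⟩
  set G := p.lexpect fun k => M ^ k
  set H := p.lexpect fun k => k * M ^ k
  have hGm : G * G ^ (m - 1) = G ^ m := by rw [← pow_succ', Nat.sub_add_cancel hm]
  have hG_top : (M - 1) * G ^ m ≠ ∞ := by have := h.2; finiteness
  rw [← ENNReal.mul_right_inj (by positivity) (ENNReal.natCast_ne_top m),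
    ← ENNReal.add_left_inj hG_top]
  calc M * ((M - 1) * (step m p).lexpect fun k => k * M ^ k) + (M - 1) * G ^ m
      = (M - 1) * (M * ((step m p).lexpect fun k => k * M ^ k) + G ^ m) := by ring
    _ = (M - 1) * (M * H * G ^ (m - 1) + p 0 ^ m) := by rw [lexpect_step_mul_pow]
    _ = M * ((M - 1) * H) * G ^ (m - 1) + (M - 1) * p 0 ^ m := by ring
    _ = (1 + (M - 1)) * G ^ m + (M - 1) * p 0 ^ m := by
      rw [h.1, mul_assoc, hGm, add_tsub_cancel_of_le hM1]
    _ = M * ((step m p).lexpect fun k => M ^ k) + (M - 1) * G ^ m := by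
      rw [lexpect_step_pow m p hM1]; ring

lemma IsCritical.lexpect_pow_le {p : PMF ℕ} {r : ℝ} (hr : 1 < r)
    (h : p.IsCritical (ENNReal.ofReal r)) :
    (p.lexpect fun k => ENNReal.ofReal r ^ k) ≤ ENNReal.ofReal (r ^ (1 / (r - 1))) := by
  have hr0 : 0 ≤ r := by linarith
  set t := Real.log r / (r - 1)
  have ht : 0 ≤ t := div_nonneg (Real.log_nonneg hr.le) (by linarith)
  have hsub : ENNReal.ofReal r - 1 = ENNReal.ofReal (r - 1) := by
    rw [ENNReal.ofReal_sub _ zero_le_one, ENNReal.ofReal_one]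
  have hpoint : ∀ k : ℕ, (1 + ENNReal.ofReal t) * ENNReal.ofReal r ^ k
      ≤ ENNReal.ofReal (r ^ (1 / (r - 1)))
        + ENNReal.ofReal t * ((ENNReal.ofReal r - 1) * (k * ENNReal.ofReal r ^ k)) := by
    intro k
    have h := one_add_mul_rpow_le hr k
    rw [Real.rpow_natCast] at h
    rw [hsub, ← ENNReal.ofReal_natCast k, ← ENNReal.ofReal_pow hr0, ← ENNReal.ofReal_one,
      ← ENNReal.ofReal_add zero_le_one ht, ← ENNReal.ofReal_mul (by positivity),
      ← ENNReal.ofReal_mul (by positivity), ← ENNReal.ofReal_mul (by linarith),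
      ← ENNReal.ofReal_mul ht, ← ENNReal.ofReal_add (by positivity) (by positivity)]
    exact ENNReal.ofReal_le_ofReal h
  set G := p.lexpect fun k => ENNReal.ofReal r ^ k
  set T := ENNReal.ofReal t
  set C := ENNReal.ofReal (r ^ (1 / (r - 1)))
  have hsum : G + T * G ≤ C + T * G :=
    calc G + T * G = (1 + T) * G := by ring
      _ ≤ p.lexpect fun k => C + T * ((ENNReal.ofReal r - 1) * (k * ENNReal.ofReal r ^ k)) := by
        rw [← lexpect_const_mul]; exact lexpect_mono p hpoint
      _ = C + T * G := by
        rw [lexpect_add, lexpect_const, lexpect_const_mul, lexpect_const_mul, h.1]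
  exact (ENNReal.add_le_add_iff_right (by have := h.2; finiteness)).mp hsum

end PMF

theorem stmt5 (m : ℕ) (hm : 2 ≤ m) (Y : ℕ → PMF ℕ)
    (hY : ∀ n, Y (n+1) = step m (Y n))
    (hcrit : ((m : ℝ≥0∞) - 1) * (∑' k, Y 0 k * ((k : ℝ≥0∞) * (m : ℝ≥0∞) ^ k))
        = ∑' k, Y 0 k * (m : ℝ≥0∞) ^ k)
    (hfin : (∑' k, Y 0 k * (m : ℝ≥0∞) ^ k) < ∞) :
    ∀ n, (∑' k, Y n k * (m : ℝ≥0∞) ^ k)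
        ≤ ENNReal.ofReal ((m : ℝ) ^ ((1 : ℝ) / ((m : ℝ) - 1))) := by
  have hcritical : ∀ n, (Y n).IsCritical m := by
    intro n
    induction n with
    | zero => exact ⟨hcrit, hfin.ne⟩
    | succ n ih => rw [hY n]; exact PMF.isCritical_step (by omega) ih
  intro n
  have h := PMF.IsCritical.lexpect_pow_le (p := Y n) (r := m) (by exact_mod_cast hm)
    (by rw [ENNReal.ofReal_natCast]; exact hcritical n)
  rwa [ENNReal.ofReal_natCast] at h
end

section
/- Assume E(X_0 m^{X_0}) < ∞. For every n ≥ 0, the function s ↦ ((m−1)·s·H_n'(s) − H_n(s))/s is non-decreasing on (0, m), where H_n(s) = E(s^{X_n}); this follows from the pointwise identity (m−1)s²H_n''(s) + H_n(s) − sH_n'(s) ≥ E[(X_n−1)² s^{X_n}] ≥ 0. -/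
/-!
Write `W j s = E(X^j s^X)`. On `(0, m)` the series may be differentiated termwise, which gives
`s H' = W 1` and `s² H'' = W 2 - W 1`. Hence `E[(X-1)² s^X] = W 2 - 2 W 1 + W 0`, and
`(m-1) s² H'' + H - s H'` exceeds it by `(m-2) (W 2 - W 1) = (m-2) E[X(X-1) s^X] ≥ 0`.
The derivative of `((m-1) s H' - H) / s` is `((m-1) s² H'' + H - s H') / s²`, so the
inequality also gives the monotonicity.
-/

open scoped ENNReal

/-- Generating function `H(s) = E(s^X)`. -/
noncomputable def genFun (p : PMF ℕ) (s : ℝ) : ℝ := ∑' k, (p k).toReal * s ^ k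

open scoped NNReal

/-- `powerMoment a j s = E(X^j s^X)` when `a` is the law of `X`. -/
noncomputable def powerMoment (a : ℕ → ℝ) (j : ℕ) (s : ℝ) : ℝ :=
  ∑' k, a k * ((k : ℝ) ^ j * s ^ k)

section PowerMoment

variable {a : ℕ → ℝ} {R : ℝ}

lemma summable_abs_mul_natCast_pow_mul_pow (ha : Summable fun k => |a k| * R ^ k) (j : ℕ)
    {r : ℝ} (hr : 0 ≤ r) (hrR : r < R) :
    Summable fun k => |a k| * (k : ℝ) ^ j * r ^ k := by
  have hR : 0 < R := hr.trans_lt hrR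
  set q := r / R
  have hq : ‖q‖ < 1 := by
    rw [Real.norm_of_nonneg (div_nonneg hr hR.le)]; exact (div_lt_one hR).2 hrR
  have hgeom := summable_pow_mul_geometric_of_norm_lt_one j hq
  set C := ∑' k : ℕ, (k : ℝ) ^ j * q ^ k
  refine (ha.mul_right C).of_nonneg_of_le (fun k => by positivity) fun k => ?_
  have hr_pow : r ^ k = q ^ k * R ^ k := by rw [← mul_pow, div_mul_cancel₀ _ hR.ne']
  calc |a k| * (k : ℝ) ^ j * r ^ k = |a k| * R ^ k * ((k : ℝ) ^ j * q ^ k) := by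
        rw [hr_pow]; ring
    _ ≤ |a k| * R ^ k * C :=
        mul_le_mul_of_nonneg_left (hgeom.le_tsum k fun i _ => by positivity) (by positivity)

lemma hasSum_powerMoment (ha : Summable fun k => |a k| * R ^ k) (j : ℕ) {s : ℝ}
    (hs : 0 ≤ s) (hsR : s < R) :
    HasSum (fun k => a k * ((k : ℝ) ^ j * s ^ k)) (powerMoment a j s) :=
  ((summable_abs_mul_natCast_pow_mul_pow ha j hs hsR).of_norm_bounded fun k => by
    simp [abs_of_nonneg hs, mul_assoc]).hasSum

lemma hasDerivAt_natCast_pow_mul_pow (k j : ℕ) {x : ℝ} (hx : x ≠ 0) :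
    HasDerivAt (fun y => (k : ℝ) ^ j * y ^ k) ((k : ℝ) ^ (j + 1) * x ^ k / x) x := by
  refine ((hasDerivAt_pow k x).const_mul ((k : ℝ) ^ j)).congr_deriv ?_
  rcases k with _ | k
  · simp
  · rw [Nat.add_sub_cancel, pow_succ x]; field_simp; ring

lemma hasDerivAt_powerMoment (ha : Summable fun k => |a k| * R ^ k) (j : ℕ) {x : ℝ}
    (hx : 0 < x) (hxR : x < R) :
    HasDerivAt (powerMoment a j) (powerMoment a (j + 1) x / x) x := by
  set r := (x + R) / 2
  have hxr : x < r := by simp only [r]; linarith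
  have hrR : r < R := by simp only [r]; linarith
  have hx_mem : x ∈ Set.Ioo (x / 2) r := ⟨by linarith, hxr⟩
  have hbound : ∀ k, ∀ y ∈ Set.Ioo (x / 2) r,
      ‖a k * ((k : ℝ) ^ (j + 1) * y ^ k / y)‖ ≤
        |a k| * (k : ℝ) ^ (j + 1) * r ^ k / (x / 2) := by
    intro k y hy
    have hy0 : 0 < y := by linarith [hy.1]
    have hr : 0 ≤ r := by linarith
    rw [norm_mul, norm_div, norm_mul, norm_pow, norm_pow, Real.norm_of_nonneg hy0.le,
      Real.norm_natCast, Real.norm_eq_abs, mul_div_assoc', ← mul_assoc]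
    gcongr
    exacts [hy.2.le, hy.1.le]
  have hderiv : HasDerivAt (powerMoment a j) (∑' k, a k * ((k : ℝ) ^ (j + 1) * x ^ k / x)) x :=
    hasDerivAt_tsum_of_isPreconnected
      ((summable_abs_mul_natCast_pow_mul_pow ha (j + 1) (hx.le.trans hxr.le) hrR).div_const _)
      isOpen_Ioo isPreconnected_Ioo
      (fun k y hy => (hasDerivAt_natCast_pow_mul_pow k j (by linarith [hy.1])).const_mul (a k))
      hbound hx_mem (hasSum_powerMoment ha j hx.le hxR).summable hx_mem
  refine hderiv.congr_deriv ?_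
  simp only [powerMoment, ← tsum_div_const, mul_div_assoc]

lemma hasDerivAt_deriv_powerMoment_zero (ha : Summable fun k => |a k| * R ^ k) {x : ℝ}
    (hx : 0 < x) (hxR : x < R) :
    HasDerivAt (deriv (powerMoment a 0))
      ((powerMoment a 2 x - powerMoment a 1 x) / x ^ 2) x := by
  have hderiv_eq : deriv (powerMoment a 0) =ᶠ[nhds x] fun y => powerMoment a 1 y / y :=
    Filter.eventually_of_mem (Ioo_mem_nhds hx hxR) fun y hy =>
      (hasDerivAt_powerMoment ha 0 hy.1 hy.2).deriv
  refine (((hasDerivAt_powerMoment ha 1 hx hxR).div (hasDerivAt_id x) hx.ne')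
    |>.congr_of_eventuallyEq hderiv_eq).congr_deriv ?_
  simp only [id, mul_one, div_mul_cancel₀ _ hx.ne']

lemma powerMoment_one_le_two (ha0 : ∀ k, 0 ≤ a k) (ha : Summable fun k => |a k| * R ^ k)
    {s : ℝ} (hs : 0 ≤ s) (hsR : s < R) : powerMoment a 1 s ≤ powerMoment a 2 s :=
  hasSum_le (fun k => mul_le_mul_of_nonneg_left (mul_le_mul_of_nonneg_right
      (by rw [pow_one]; exact_mod_cast Nat.le_self_pow two_ne_zero k) (pow_nonneg hs k)) (ha0 k))
    (hasSum_powerMoment ha 1 hs hsR) (hasSum_powerMoment ha 2 hs hsR)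

lemma tsum_mul_sub_one_sq_mul_pow (ha : Summable fun k => |a k| * R ^ k) {s : ℝ}
    (hs : 0 ≤ s) (hsR : s < R) :
    ∑' k, a k * ((k : ℝ) - 1) ^ 2 * s ^ k =
      powerMoment a 2 s - 2 * powerMoment a 1 s + powerMoment a 0 s := by
  have h := ((hasSum_powerMoment ha 2 hs hsR).sub
    ((hasSum_powerMoment ha 1 hs hsR).mul_left 2)).add (hasSum_powerMoment ha 0 hs hsR)
  rw [← h.tsum_eq]
  exact tsum_congr fun k => by ring

lemma tsum_mul_sub_one_sq_mul_pow_le (ha0 : ∀ k, 0 ≤ a k) (ha : Summable fun k => |a k| * R ^ k)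
    {c s : ℝ} (hc : 1 ≤ c) (hs : 0 < s) (hsR : s < R) :
    ∑' k, a k * ((k : ℝ) - 1) ^ 2 * s ^ k ≤
      c * s ^ 2 * deriv (deriv (powerMoment a 0)) s + powerMoment a 0 s
        - s * deriv (powerMoment a 0) s := by
  rw [(hasDerivAt_deriv_powerMoment_zero ha hs hsR).deriv,
    (hasDerivAt_powerMoment ha 0 hs hsR).deriv, tsum_mul_sub_one_sq_mul_pow ha hs.le hsR]
  have h12 := powerMoment_one_le_two ha0 ha hs.le hsR
  field_simp
  nlinarith

end PowerMoment

lemma hasDerivAt_mul_deriv_sub_div {f : ℝ → ℝ} {f'' c x : ℝ} (hf : DifferentiableAt ℝ f x)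
    (hf' : HasDerivAt (deriv f) f'' x) (hx : x ≠ 0) :
    HasDerivAt (fun s => (c * s * deriv f s - f s) / s)
      ((c * x ^ 2 * f'' + f x - x * deriv f x) / x ^ 2) x := by
  refine ((((hasDerivAt_id x).const_mul c).mul hf').sub hf.hasDerivAt |>.div (hasDerivAt_id x)
    hx).congr_deriv ?_
  simp only [id, Pi.sub_apply, Pi.mul_apply]
  field_simp
  ring

lemma monotoneOn_mul_deriv_sub_div {f : ℝ → ℝ} {c b : ℝ}
    (hf : ∀ x ∈ Set.Ioo 0 b, DifferentiableAt ℝ f x)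
    (hf' : ∀ x ∈ Set.Ioo 0 b, DifferentiableAt ℝ (deriv f) x)
    (hnonneg : ∀ x ∈ Set.Ioo 0 b, 0 ≤ c * x ^ 2 * deriv (deriv f) x + f x - x * deriv f x) :
    MonotoneOn (fun s => (c * s * deriv f s - f s) / s) (Set.Ioo 0 b) := by
  have hderiv x (hx : x ∈ Set.Ioo 0 b) :=
    hasDerivAt_mul_deriv_sub_div (c := c) (hf x hx) (hf' x hx).hasDerivAt hx.1.ne'
  refine monotoneOn_of_hasDerivWithinAt_nonneg (convex_Ioo 0 b)
    (f' := fun x => (c * x ^ 2 * deriv (deriv f) x + f x - x * deriv f x) / x ^ 2)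
    (fun x hx => (hderiv x hx).continuousAt.continuousWithinAt) (fun x hx => ?_) (fun x hx => ?_)
  all_goals rw [interior_Ioo] at hx
  · exact (hderiv x hx).hasDerivWithinAt
  · exact div_nonneg (hnonneg x hx) (sq_nonneg x)

lemma genFun_eq_powerMoment (p : PMF ℕ) : genFun p = powerMoment (fun k => (p k).toReal) 0 := by
  funext s
  simp [genFun, powerMoment]

lemma PMF.summable_toReal_mul_pow {p : PMF ℕ} {x : ℝ≥0}
    (hfin : ∑' k, p k * ((k : ℝ≥0∞) * (x : ℝ≥0∞) ^ k) < ∞) :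
    Summable fun k => (p k).toReal * (x : ℝ) ^ k := by
  have hle : ∑' k, p k * (x : ℝ≥0∞) ^ k ≤ ∑' k, p k * ((k : ℝ≥0∞) * (x : ℝ≥0∞) ^ k) + 1 := by
    rw [← p.tsum_coe, ← ENNReal.tsum_add]
    refine ENNReal.tsum_le_tsum fun k => ?_
    rcases k with _ | k
    · simp
    · exact le_add_right (by gcongr; exact le_mul_of_one_le_left' (by simp))
  have hlt := hle.trans_lt (ENNReal.add_lt_top.2 ⟨hfin, ENNReal.one_lt_top⟩)
  simpa using ENNReal.summable_toReal hlt.ne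

theorem stmt7 (m : ℕ) (hm : 2 ≤ m) (p : PMF ℕ)
    (hfin : (∑' k, p k * ((k : ℝ≥0∞) * (m : ℝ≥0∞) ^ k)) < ∞) :
    (∀ s ∈ Set.Ioo (0 : ℝ) (m : ℝ),
      (0 : ℝ) ≤ ∑' k, (p k).toReal * ((k : ℝ) - 1) ^ 2 * s ^ k ∧
      (∑' k, (p k).toReal * ((k : ℝ) - 1) ^ 2 * s ^ k)
        ≤ ((m : ℝ) - 1) * s ^ 2 * deriv (deriv (genFun p)) s
            + genFun p s - s * deriv (genFun p) s) ∧
    MonotoneOn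
      (fun s => (((m : ℝ) - 1) * s * deriv (genFun p) s - genFun p s) / s)
      (Set.Ioo 0 (m : ℝ)) := by
  set a : ℕ → ℝ := fun k => (p k).toReal
  have ha0 (k : ℕ) : 0 ≤ a k := ENNReal.toReal_nonneg
  have ha : Summable fun k => |a k| * (m : ℝ) ^ k := by
    simpa [a] using PMF.summable_toReal_mul_pow (x := m) (by simpa using hfin)
  have hc : (1 : ℝ) ≤ m - 1 := by
    have : (2 : ℝ) ≤ m := by exact_mod_cast hm
    linarith
  have key : ∀ s ∈ Set.Ioo (0 : ℝ) m,
      0 ≤ ∑' k, a k * ((k : ℝ) - 1) ^ 2 * s ^ k ∧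
      ∑' k, a k * ((k : ℝ) - 1) ^ 2 * s ^ k ≤
        ((m : ℝ) - 1) * s ^ 2 * deriv (deriv (powerMoment a 0)) s + powerMoment a 0 s
          - s * deriv (powerMoment a 0) s := fun s hs =>
    ⟨tsum_nonneg fun k => mul_nonneg (mul_nonneg (ha0 k) (sq_nonneg _)) (pow_nonneg hs.1.le k),
      tsum_mul_sub_one_sq_mul_pow_le ha0 ha hc hs.1 hs.2⟩
  rw [genFun_eq_powerMoment]
  exact ⟨key, monotoneOn_mul_deriv_sub_div
    (fun x hx => (hasDerivAt_powerMoment ha 0 hx.1 hx.2).differentiableAt)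
    (fun x hx => (hasDerivAt_deriv_powerMoment_zero ha hx.1 hx.2).differentiableAt)
    (fun x hx => (key x hx).1.trans (key x hx).2)⟩
end
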